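/- arXiv:2602.03428 — 6 statements merged into one kernel-verified Lean document; each statement's English description precedes it below -/
import Mathlib

section
/- For every α ∈ (0,1], the cubic polynomial p_α(x) = c₀(α) + c₁(α)·x + c₂(α)·x² + c₃(α)·x³ has three distinct, strictly positive real roots; that is, there exist real numbers x₁, x₂, x₃ with 0 < x₁ < x₂ < x₃ such that p_α(x₁) = p_α(x₂) = p_α(x₃) = 0. -/
/-! `p_α` is positive at `0`, negative at `51`, positive at `56/α` and negative at `1000/α²`,
and these points increase for `α ∈ (0,1]`; the intermediate value theorem then gives three
positive roots. The test points follow the scale of the roots as `α → 0`: two stay bounded,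
while `c₂ ≈ 320`, `c₃ ≈ -8α²` put the third near `40/α²`. After clearing powers of `α`, the
sign of `p_α` at each test point is that of a polynomial in `α` of constant sign on `[0,1]`. -/

noncomputable section

/-- Coefficient `c₀(α) = 1024000·(2α² + α + 2)`. -/
def c0 (α : ℝ) : ℝ := 1024000 * (2 * α ^ 2 + α + 2)

/-- Coefficient `c₁(α) = −1600·(α³·(60 − 19α) + 47α² + 136α + 36)`. -/
def c1 (α : ℝ) : ℝ := -1600 * (α ^ 3 * (60 - 19 * α) + 47 * α ^ 2 + 136 * α + 36)

/-- Coefficient `c₂(α) = 20·(α³·(222 − 35α³) + (16 − 15α⁵) + 12α⁴ + 188α² + 112α)`. -/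
def c2 (α : ℝ) : ℝ :=
  20 * (α ^ 3 * (222 - 35 * α ^ 3) + (16 - 15 * α ^ 5) + 12 * α ^ 4 + 188 * α ^ 2 + 112 * α)

/-- Coefficient `c₃(α) = −(α⁴·(26 − 21α) + α²·(41 − 31α) + 52α + 8)·α²`. -/
def c3 (α : ℝ) : ℝ := -((α ^ 4 * (26 - 21 * α) + α ^ 2 * (41 - 31 * α) + 52 * α + 8) * α ^ 2)

/-- The cubic polynomial `p_α(x) = c₀(α) + c₁(α)·x + c₂(α)·x² + c₃(α)·x³`. -/
def p (α x : ℝ) : ℝ := c0 α + c1 α * x + c2 α * x ^ 2 + c3 α * x ^ 3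

theorem exists_three_roots_of_alternating_signs {X Y : Type*} [ConditionallyCompleteLinearOrder X]
    [TopologicalSpace X] [OrderTopology X] [DenselyOrdered X] [LinearOrder Y]
    [TopologicalSpace Y] [OrderClosedTopology Y] [Zero Y] {f : X → Y} (hf : Continuous f)
    {a b c d : X} (hab : a ≤ b) (hbc : b ≤ c) (hcd : c ≤ d)
    (ha : 0 < f a) (hb : f b < 0) (hc : 0 < f c) (hd : f d < 0) :
    ∃ x₁ x₂ x₃, a < x₁ ∧ x₁ < x₂ ∧ x₂ < x₃ ∧ f x₁ = 0 ∧ f x₂ = 0 ∧ f x₃ = 0 := by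
  obtain ⟨x₁, ⟨hax₁, hx₁b⟩, hx₁⟩ := intermediate_value_Ioo' hab hf.continuousOn ⟨hb, ha⟩
  obtain ⟨x₂, ⟨hbx₂, hx₂c⟩, hx₂⟩ := intermediate_value_Ioo hbc hf.continuousOn ⟨hb, hc⟩
  obtain ⟨x₃, ⟨hcx₃, -⟩, hx₃⟩ := intermediate_value_Ioo' hcd hf.continuousOn ⟨hd, hc⟩
  exact ⟨x₁, x₂, x₃, hax₁, hx₁b.trans hbx₂, hx₂c.trans hcx₃, hx₁, hx₂, hx₃⟩

theorem continuous_p (α : ℝ) : Continuous (p α) := by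
  unfold p
  fun_prop

theorem p_zero_pos (α : ℝ) : 0 < p α 0 := by
  simp only [p, c0]
  nlinarith [sq_nonneg (4 * α + 1)]

theorem p_fiftyone_neg {α : ℝ} (hα0 : 0 ≤ α) (hα1 : α ≤ 1) : p α 51 < 0 := by
  have h1α : 0 ≤ 1 - α := by linarith
  have hq : 0 < 57280 + 4247360 * α - 6931352 * α ^ 2 + 245412 * α ^ 3 + 3264051 * α ^ 4
      - 3331881 * α ^ 5 + 5269626 * α ^ 6 - 2785671 * α ^ 7 := by
    nlinarith [mul_nonneg h1α hα0, sq_nonneg (1 - α), sq_nonneg (α * (1 - α)),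
      mul_nonneg (mul_nonneg h1α hα0) (sq_nonneg (1 - α)),
      mul_nonneg (mul_nonneg h1α hα0) (sq_nonneg α),
      mul_nonneg (sq_nonneg (α * (1 - α))) hα0,
      mul_nonneg (sq_nonneg (α * (1 - α))) h1α,
      pow_nonneg hα0 3,
      sq_nonneg (α ^ 2 * (1 - α)), mul_nonneg (sq_nonneg (α ^ 2 * (1 - α))) h1α]
  unfold p c0 c1 c2 c3
  linear_combination hq

theorem p_fiftysix_div_pos {α : ℝ} (hα0 : 0 < α) (hα1 : α ≤ 1) : 0 < p α (56 / α) := by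
  have hq : 0 < 1003520 + 2394112 * α - 7478272 * α ^ 2 + 3536384 * α ^ 3 + 2868736 * α ^ 4
      - 3804416 * α ^ 5 + 1492736 * α ^ 6 := by
    nlinarith [sq_nonneg α, sq_nonneg (1 - α), sq_nonneg (α ^ 2 - α), sq_nonneg (α ^ 3 - α ^ 2),
      sq_nonneg (α ^ 3 - α)]
  have hp : p α (56 / α) = (1003520 + 2394112 * α - 7478272 * α ^ 2 + 3536384 * α ^ 3
      + 2868736 * α ^ 4 - 3804416 * α ^ 5 + 1492736 * α ^ 6) / α ^ 2 := by
    unfold p c0 c1 c2 c3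
    field_simp
    ring
  rw [hp]
  exact div_pos hq (by positivity)

theorem p_thousand_div_sq_neg {α : ℝ} (hα0 : 0 < α) (hα1 : α ≤ 1) : p α (1000 / α ^ 2) < 0 := by
  have hq : 0 < 7680000000 + 49760000000 * α + 37297600000 * α ^ 2 - 35222400000 * α ^ 3
      + 25833152000 * α ^ 4 - 20605024000 * α ^ 5 + 667552000 * α ^ 6 := by
    nlinarith [sq_nonneg α, sq_nonneg (1 - α), sq_nonneg (α ^ 2 - α), sq_nonneg (α ^ 3 - α ^ 2)]
  have hp : p α (1000 / α ^ 2) = -(7680000000 + 49760000000 * α + 37297600000 * α ^ 2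
      - 35222400000 * α ^ 3 + 25833152000 * α ^ 4 - 20605024000 * α ^ 5
      + 667552000 * α ^ 6) / α ^ 4 := by
    unfold p c0 c1 c2 c3
    field_simp
    ring
  rw [hp, neg_div, neg_lt_zero]
  exact div_pos hq (by positivity)

/-- For every `α ∈ (0,1]`, the cubic `p_α` has three distinct strictly
positive real roots. -/
theorem stmt0 (α : ℝ) (hα0 : 0 < α) (hα1 : α ≤ 1) :
    ∃ x₁ x₂ x₃ : ℝ, 0 < x₁ ∧ x₁ < x₂ ∧ x₂ < x₃ ∧
      p α x₁ = 0 ∧ p α x₂ = 0 ∧ p α x₃ = 0 := by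
  have h51 : (51 : ℝ) ≤ 56 / α := by
    rw [le_div_iff₀ hα0]
    linarith
  have h56 : 56 / α ≤ 1000 / α ^ 2 := by
    rw [div_le_div_iff₀ hα0 (by positivity)]
    nlinarith
  exact exists_three_roots_of_alternating_signs (continuous_p α) (by norm_num) h51 h56
    (p_zero_pos α) (p_fiftyone_neg hα0.le hα1) (p_fiftysix_div_pos hα0 hα1)
    (p_thousand_div_sq_neg hα0 hα1)
end
end

section
/- For every α ∈ (0,1] and every real number x ≤ 0, the value p_α(x) is strictly positive; in particular p_α has no root in (−∞, 0]. -/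
/-! On `[0, 1]` the coefficients `c₀, c₁, c₂, c₃` alternate in sign, with `c₀ > 0`, so for `x ≤ 0`
every term `cₖ(α) xᵏ` of `p_α(x)` is nonnegative and the constant term is positive. -/

noncomputable section

theorem cubic_pos_of_alternating_signs {a b c d x : ℝ} (ha : 0 < a) (hb : b ≤ 0) (hc : 0 ≤ c)
    (hd : d ≤ 0) (hx : x ≤ 0) : 0 < a + b * x + c * x ^ 2 + d * x ^ 3 := by
  have hbx : 0 ≤ b * x := mul_nonneg_of_nonpos_of_nonpos hb hx
  have hcx : 0 ≤ c * x ^ 2 := by positivity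
  have hdx : 0 ≤ d * x ^ 3 := mul_nonneg_of_nonpos_of_nonpos hd (Odd.pow_nonpos (by decide) hx)
  linarith

theorem c0_pos (α : ℝ) : 0 < c0 α := by
  unfold c0
  nlinarith [sq_nonneg (4 * α + 1)]

section UnitInterval

variable {α : ℝ} (h0 : 0 ≤ α) (h1 : α ≤ 1)
include h0 h1

theorem c1_nonpos : c1 α ≤ 0 := by
  have hcubic : 0 ≤ α ^ 3 * (60 - 19 * α) := mul_nonneg (by positivity) (by linarith)
  unfold c1
  nlinarith

theorem c2_nonneg : 0 ≤ c2 α := by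
  have hα3 : α ^ 3 ≤ 1 := pow_le_one₀ h0 h1
  have hα5 : α ^ 5 ≤ 1 := pow_le_one₀ h0 h1
  have hsextic : 0 ≤ α ^ 3 * (222 - 35 * α ^ 3) := mul_nonneg (by positivity) (by linarith)
  unfold c2
  nlinarith [pow_nonneg h0 4]

theorem c3_nonpos : c3 α ≤ 0 := by
  have hquintic : 0 ≤ α ^ 4 * (26 - 21 * α) := mul_nonneg (by positivity) (by linarith)
  have hcubic : 0 ≤ α ^ 2 * (41 - 31 * α) := mul_nonneg (by positivity) (by linarith)
  exact neg_nonpos.mpr (mul_nonneg (by linarith) (sq_nonneg α))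

end UnitInterval

/-- For `α ∈ (0,1]` and `x ≤ 0`, `p_α(x) > 0`; in particular `p_α`
has no root in `(−∞, 0]`. -/
theorem stmt2 (α : ℝ) (hα0 : 0 < α) (hα1 : α ≤ 1) (x : ℝ) (hx : x ≤ 0) :
    0 < p α x :=
  cubic_pos_of_alternating_signs (c0_pos α) (c1_nonpos hα0.le hα1) (c2_nonneg hα0.le hα1)
    (c3_nonpos hα0.le hα1) hx
end
end

section
/- For every b ∈ [0, 1/2], the polynomial w(b) = 13375·b⁵·(1 − b) + 2625·b⁷ + b²·(14875·b³ − 29495·b² + 10905·b + 567) + 500·b + 55 satisfies w(b) ≥ 55. -/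
/-!
Since `w(b) - 55 = b · p(b)` with
`p(b) = 500 + 567 b + b² (28250 b² - 29495 b + 10905) - b⁵ (13375 - 2625 b)`,
it suffices that `p > 0` on `[0, 1/2]`. The quadratic factor has negative discriminant, and
`b⁵ (13375 - 2625 b) ≤ 13375 / 32 < 500` there.
-/

lemma quadratic_factor_pos (b : ℝ) : 0 < 28250 * b ^ 2 - 29495 * b + 10905 := by
  nlinarith [sq_nonneg (b - 29495 / 56500)]

lemma quintic_term_le {b : ℝ} (hb0 : 0 ≤ b) (hb1 : b ≤ 1 / 2) :
    b ^ 5 * (13375 - 2625 * b) ≤ 13375 / 32 := by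
  have hpow : b ^ 5 ≤ (1 / 2) ^ 5 := pow_le_pow_left₀ hb0 hb1 5
  calc b ^ 5 * (13375 - 2625 * b) ≤ (1 / 2) ^ 5 * 13375 := by
        gcongr
        · linarith
        · linarith
    _ = 13375 / 32 := by norm_num

lemma cofactor_pos {b : ℝ} (hb0 : 0 ≤ b) (hb1 : b ≤ 1 / 2) :
    0 < 500 + 567 * b + b ^ 2 * (28250 * b ^ 2 - 29495 * b + 10905) -
      b ^ 5 * (13375 - 2625 * b) := by
  have hquad := mul_nonneg (sq_nonneg b) (quadratic_factor_pos b).le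
  linarith [quintic_term_le hb0 hb1]

/-- For every `b ∈ [0, 1/2]`,
`w(b) = 13375·b⁵·(1 − b) + 2625·b⁷ + b²·(14875·b³ − 29495·b² + 10905·b + 567) + 500·b + 55 ≥ 55`. -/
theorem stmt4 (b : ℝ) (hb0 : 0 ≤ b) (hb1 : b ≤ 1 / 2) :
    55 ≤ 13375 * b ^ 5 * (1 - b) + 2625 * b ^ 7 +
        b ^ 2 * (14875 * b ^ 3 - 29495 * b ^ 2 + 10905 * b + 567) + 500 * b + 55 := by
  have hfactor : 13375 * b ^ 5 * (1 - b) + 2625 * b ^ 7 +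
        b ^ 2 * (14875 * b ^ 3 - 29495 * b ^ 2 + 10905 * b + 567) + 500 * b + 55 - 55 =
      b * (500 + 567 * b + b ^ 2 * (28250 * b ^ 2 - 29495 * b + 10905) -
        b ^ 5 * (13375 - 2625 * b)) := by
    ring
  have := mul_nonneg hb0 (cofactor_pos hb0 hb1).le
  linarith
end

section
/- For every α ∈ (0, 1], the value of the cubic polynomial p_α at x = 50 is strictly negative: p_α(50) < 0. -/
noncomputable section

/-!
`p α 50` is `1000` times a degree-`7` polynomial in `α` whose Bernstein coefficients on `[0, 1]` are
all negative; the Bernstein basis polynomials are nonnegative on `[0, 1]` and the last one, `α ^ 7`,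
is positive for `α > 0`.
-/

open Polynomial

lemma bernsteinPolynomial_eval_nonneg (n ν : ℕ) {x : ℝ} (hx0 : 0 ≤ x) (hx1 : x ≤ 1) :
    0 ≤ (bernsteinPolynomial ℝ n ν).eval x := by
  have : 0 ≤ 1 - x := sub_nonneg.mpr hx1
  simp only [bernsteinPolynomial, eval_mul, eval_natCast, eval_pow, eval_X, eval_sub, eval_one]
  positivity

lemma bernsteinPolynomial_eval_self_pos (n : ℕ) {x : ℝ} (hx : 0 < x) :
    0 < (bernsteinPolynomial ℝ n n).eval x := by
  simp only [bernsteinPolynomial, Nat.choose_self, Nat.sub_self, pow_zero, mul_one, Nat.cast_one,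
    one_mul, eval_pow, eval_X]
  positivity

theorem sum_mul_bernsteinPolynomial_eval_pos {n : ℕ} {b : Fin (n + 1) → ℝ} (hb : ∀ ν, 0 ≤ b ν)
    (hb_last : 0 < b (Fin.last n)) {x : ℝ} (hx0 : 0 < x) (hx1 : x ≤ 1) :
    0 < ∑ ν : Fin (n + 1), b ν * (bernsteinPolynomial ℝ n ν).eval x := by
  rw [Fin.sum_univ_castSucc]
  refine add_pos_of_nonneg_of_pos (Finset.sum_nonneg fun ν _ => ?_) ?_
  · exact mul_nonneg (hb _) (bernsteinPolynomial_eval_nonneg _ _ hx0.le hx1)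
  · exact mul_pos hb_last (bernsteinPolynomial_eval_self_pos n hx0)

def pFiftyBernsteinCoeff : Fin 8 → ℝ :=
  ![32, 640, 19520 / 21, 6344 / 7, 4633 / 7, 4722 / 21, 885 / 7, 55]

lemma p_fifty_eq_bernstein (α : ℝ) :
    p α 50 = -1000 * ∑ ν : Fin 8, pFiftyBernsteinCoeff ν * (bernsteinPolynomial ℝ 7 ν).eval α := by
  simp only [pFiftyBernsteinCoeff, bernsteinPolynomial, eval_mul, eval_natCast, eval_pow, eval_X, eval_sub,
    eval_one, Fin.sum_univ_eight, Fin.isValue, Matrix.cons_val_zero, Nat.choose, Nat.cast_one, Fin.coe_ofNat_eq_mod,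
    Nat.zero_mod, pow_zero, mul_one, tsub_zero, one_mul, Matrix.cons_val_one, add_zero, Nat.reduceAdd, Nat.cast_ofNat,
    Nat.one_mod, pow_one, Nat.add_one_sub_one, Matrix.cons_val, Nat.reduceMod, Nat.reduceSub, Nat.mod_succ, tsub_self]
  unfold p c0 c1 c2 c3
  ring

/-- For every `α ∈ (0, 1]`, `p_α(50) < 0`. -/
theorem stmt9 (α : ℝ) (hα0 : 0 < α) (hα1 : α ≤ 1) :
    p α 50 < 0 := by
  have hpos := sum_mul_bernsteinPolynomial_eval_pos (b := pFiftyBernsteinCoeff)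
    (by intro ν; fin_cases ν <;> norm_num [pFiftyBernsteinCoeff])
    (by norm_num [pFiftyBernsteinCoeff, Fin.last]) hα0 hα1
  rw [p_fifty_eq_bernstein]
  linarith
end
end

section
/- For every b ∈ [0, 1/2], the polynomial ζ(b) = 100·b⁹·(517 − 210·b) + b⁵·(12494 + 165531·b − 113321·b² − 6930·b³) + b·(4588 + 42097·b + 14067·b² − 153097·b³) + 95 satisfies ζ(b) ≥ 95. -/
/-!
Since `ζ(b) - 95` vanishes at `0`, it splits as
`b·(4588 - 113321 b⁶ - 6930 b⁷ - 21000 b⁹) + b²·(42097 - 153097 b²)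
  + b³·(14067 + 12494 b² + 165531 b³ + 51700 b⁶)`.
On `[0, 1/2]` each negative monomial is at most its value at `1/2`, which leaves both brackets
positive (`4588 > 1866` and `42097 > 38275`); the last bracket is a sum of nonnegative terms.
-/

/-- For every `b ∈ [0, 1/2]`,
`ζ(b) = 100·b⁹·(517 − 210·b) + b⁵·(12494 + 165531·b − 113321·b² − 6930·b³)
  + b·(4588 + 42097·b + 14067·b² − 153097·b³) + 95 ≥ 95`. -/
theorem stmt16 (b : ℝ) (hb0 : 0 ≤ b) (hb1 : b ≤ 1 / 2) :
    95 ≤ 100 * b ^ 9 * (517 - 210 * b) +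
        b ^ 5 * (12494 + 165531 * b - 113321 * b ^ 2 - 6930 * b ^ 3) +
        b * (4588 + 42097 * b + 14067 * b ^ 2 - 153097 * b ^ 3) + 95 := by
  have hpow (n : ℕ) : b ^ n ≤ (1 / 2) ^ n := pow_le_pow_left₀ hb0 hb1 n
  have hlin : 0 ≤ 4588 - 113321 * b ^ 6 - 6930 * b ^ 7 - 21000 * b ^ 9 := by
    linarith [hpow 6, hpow 7, hpow 9]
  have hquad : 0 ≤ 42097 - 153097 * b ^ 2 := by linarith [hpow 2]
  have hcub : 0 ≤ 14067 + 12494 * b ^ 2 + 165531 * b ^ 3 + 51700 * b ^ 6 := by positivity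
  linear_combination mul_nonneg hb0 hlin + mul_nonneg (sq_nonneg b) hquad +
    mul_nonneg (pow_nonneg hb0 3) hcub
end

section
/- For every α ∈ [1/2, 1], the value of the cubic polynomial p_α at the point y_α = 105 − 50·α (note y_α > 50 on this range) is strictly positive: p_α(105 − 50·α) > 0. -/
/-! On `[1/2, 1]` write `t = 1 - α` and `s = α - 1/2`, both nonnegative with `t + s = 1/2`.
Expanded in the Bernstein basis `t ^ k * s ^ (10 - k)`, the polynomial `p α (105 - 50 α)` has
coefficients that dominate `12160000 * choose 10 k`, so by the binomial theorem it is at least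
`12160000 * (t + s) ^ 10 = 11875 > 0`. -/

noncomputable section

/-- The coefficients of the degree-10 polynomial `α ↦ p α (105 - 50 * α)` in the unnormalised
Bernstein basis `(1 - α) ^ k * (α - 1 / 2) ^ (10 - k)` of `[1/2, 1]`. -/
def bernsteinCoeff (k : ℕ) : ℝ :=
  [12160000, 415232000, 4536992000, 23031856000, 65288328000, 112927608000, 123935334000,
    86654799000, 37334440000, 9008128000, 927744000].getD k 0

theorem mul_add_pow_le_sum_mul_pow_mul_pow {R : Type*} [CommSemiring R] [PartialOrder R]
    [IsOrderedRing R] {n : ℕ} {m t s : R} {d : ℕ → R} (ht : 0 ≤ t) (hs : 0 ≤ s)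
    (hd : ∀ k ≤ n, m * n.choose k ≤ d k) :
    m * (t + s) ^ n ≤ ∑ k ∈ Finset.range (n + 1), d k * t ^ k * s ^ (n - k) := by
  rw [add_pow, Finset.mul_sum]
  refine Finset.sum_le_sum fun k hk => ?_
  calc m * (t ^ k * s ^ (n - k) * n.choose k) = m * n.choose k * (t ^ k * s ^ (n - k)) := by ring
    _ ≤ d k * (t ^ k * s ^ (n - k)) :=
        mul_le_mul_of_nonneg_right (hd k (Nat.lt_succ_iff.mp (Finset.mem_range.mp hk)))
          (by positivity)
    _ = d k * t ^ k * s ^ (n - k) := by ring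

theorem p_eq_sum_bernsteinCoeff (α : ℝ) :
    p α (105 - 50 * α) =
      ∑ k ∈ Finset.range 11, bernsteinCoeff k * (1 - α) ^ k * (α - 1 / 2) ^ (10 - k) := by
  simp only [Finset.sum_range_succ, Finset.sum_range_zero, bernsteinCoeff, p, c0, c1, c2, c3, List.getD_cons_succ, List.getD_cons_zero]
  ring

theorem choose_le_bernsteinCoeff :
    ∀ k ≤ 10, 12160000 * (Nat.choose 10 k : ℝ) ≤ bernsteinCoeff k := by
  intro k hk
  interval_cases k <;> norm_num [bernsteinCoeff, Nat.choose]

/-- For every `α ∈ [1/2, 1]`, with `y_α = 105 − 50·α` (which is `> 50`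
on this range), one has `p_α(105 − 50·α) > 0`. -/
theorem stmt17 (α : ℝ) (hα0 : 1 / 2 ≤ α) (hα1 : α ≤ 1) :
    0 < p α (105 - 50 * α) := by
  rw [p_eq_sum_bernsteinCoeff]
  calc (0 : ℝ) < 12160000 * ((1 - α) + (α - 1 / 2)) ^ 10 := by norm_num
    _ ≤ _ := mul_add_pow_le_sum_mul_pow_mul_pow (sub_nonneg.mpr hα1) (sub_nonneg.mpr hα0)
        choose_le_bernsteinCoeff
end
end
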